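/- A line T of P(K, U×U) is a transversal of the standard regulus R₀ (i.e., meets each element of R₀ in exactly one point) if and only if T = K(z,0) ⊕ K(0,z) for some nonzero z in the Z-subspace of U with respect to (b_i). -/

import Mathlib

/-!
Each member of `R₀` is the image of an injective map `U → U × U` (`inl`, or `u ↦ (λ_k u, u)`), so
`T ⊓ X` is isomorphic to the preimage of `T`. Meeting `U × 0` and `0 × U` (`k = 0`) in points forces
`T = Kz × Kw`, meeting the diagonal (`k = 1`) forces `Kz = Kw`, and meeting the other graphs says
that the point `Kz` is invariant under every `λ_k`. As `λ_k` multiplies coordinates on the right by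
`k`, once one coordinate of `z` is normalised to `1` this invariance says exactly that all
coordinates of `z` commute with every `k`.
-/

open Module Submodule

section LinearAlgebra

variable {K V W : Type*} [DivisionRing K] [AddCommGroup V] [Module K V] [AddCommGroup W]
  [Module K W]

theorem Submodule.exists_mem_ne_zero_of_finrank_eq_one {S : Submodule K V}
    (h : finrank K S = 1) : ∃ v ∈ S, v ≠ 0 :=
  exists_mem_ne_zero_of_ne_bot (by rintro rfl; simp at h)

theorem Submodule.span_singleton_eq_of_mem {v z : V} (hv : v ≠ 0) (h : v ∈ K ∙ z) :
    K ∙ v = K ∙ z := by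
  obtain ⟨t, rfl⟩ := mem_span_singleton.1 h
  exact span_singleton_smul_eq (IsUnit.mk0 t (by rintro rfl; simp at hv)) z

theorem Submodule.finrank_inf_range_of_injective (T : Submodule K W) {g : V →ₗ[K] W}
    (hg : Function.Injective g) : finrank K ↥(T ⊓ LinearMap.range g) = finrank K (T.comap g) := by
  rw [inf_comm, ← map_comap_eq]
  exact (equivMapOfInjective g hg _).finrank_eq.symm

theorem Submodule.exists_ne_zero_map_mem_of_finrank_inf_range (T : Submodule K W)
    {g : V →ₗ[K] W} (hg : Function.Injective g) (h : finrank K ↥(T ⊓ LinearMap.range g) = 1) :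
    ∃ v ≠ 0, g v ∈ T := by
  rw [finrank_inf_range_of_injective T hg] at h
  obtain ⟨v, hv, hv0⟩ := exists_mem_ne_zero_of_finrank_eq_one h
  exact ⟨v, hv0, hv⟩

theorem LinearMap.prod_id_injective (f : V →ₗ[K] W) : Function.Injective (f.prod LinearMap.id) :=
  fun _ _ h => congrArg Prod.snd h

theorem Submodule.fst_eq_range_inl : Submodule.fst K V W = LinearMap.range (LinearMap.inl K V W) :=
  (LinearMap.range_inl K V W).symm

theorem Submodule.span_pair_inl_inr (z : V) (w : W) :
    span K ({(z, 0), (0, w)} : Set (V × W)) = (K ∙ z).prod (K ∙ w) := by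
  rw [← LinearMap.span_inl_union_inr, Set.image_singleton, Set.image_singleton,
    Set.singleton_union]
  rfl

theorem Submodule.eq_prod_of_finrank_eq_two {T : Submodule K (V × W)} (hT : finrank K T = 2)
    {z : V} {w : W} (hz : z ≠ 0) (hw : w ≠ 0) (hzT : (z, 0) ∈ T) (hwT : (0, w) ∈ T) :
    T = (K ∙ z).prod (K ∙ w) := by
  have : FiniteDimensional K T := Module.finite_of_finrank_eq_succ hT
  have hli : LinearIndependent K ![((z, 0) : V × W), (0, w)] := by
    refine (LinearIndependent.pair_iff' (by simpa)).2 fun a h => hw ?_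
    simpa using (congrArg Prod.snd h).symm
  rw [← span_pair_inl_inr]
  refine (eq_of_le_of_finrank_eq ?_ ?_).symm
  · rw [span_le, Set.insert_subset_iff, Set.singleton_subset_iff]
    exact ⟨hzT, hwT⟩
  · rw [hT, ← Matrix.range_cons_cons_empty, finrank_span_eq_card hli, Fintype.card_fin]

end LinearAlgebra

section RightScalar

variable {K U I : Type*} [DivisionRing K] [AddCommGroup U] [Module K U] (b : Basis I K U)
  {lam : K → Module.End K U}

theorem repr_lam_apply (hlam : ∀ (k : K) (i : I), lam k (b i) = k • b i) (k : K) (x : U) (j : I) :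
    b.repr (lam k x) j = b.repr x j * k := by
  have h : (b.coord j).comp (lam k) = (LinearMap.toSpanSingleton K K k).comp (b.coord j) :=
    b.ext fun i => by
      simp only [LinearMap.comp_apply, hlam, LinearMap.map_smul, Basis.coord_apply, Basis.repr_self]
      rcases eq_or_ne i j with rfl | hij <;> simp [*]
  exact LinearMap.congr_fun h x

theorem lam_zero (hlam : ∀ (k : K) (i : I), lam k (b i) = k • b i) : lam 0 = 0 :=
  b.ext fun i => by simp [hlam]

theorem lam_one (hlam : ∀ (k : K) (i : I), lam k (b i) = k • b i) : lam 1 = 1 :=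
  b.ext fun i => by simp [hlam]

theorem lam_eq_smul_of_repr_mem_center (hlam : ∀ (k : K) (i : I), lam k (b i) = k • b i) {z : U}
    (hz : ∀ j, b.repr z j ∈ Subring.center K) (k : K) : lam k z = k • z :=
  b.repr.injective <| Finsupp.ext fun j => by
    rw [repr_lam_apply b hlam, map_smul, Finsupp.smul_apply, smul_eq_mul,
      Subring.mem_center_iff.1 (hz j) k]

theorem repr_mem_center_of_lam_mem_span (hlam : ∀ (k : K) (i : I), lam k (b i) = k • b i)
    {z : U} {j₀ : I} (hz : b.repr z j₀ = 1)
    (h : ∀ k, lam k z ∈ K ∙ z) (j : I) : b.repr z j ∈ Subring.center K := by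
  refine Subring.mem_center_iff.2 fun k => ?_
  obtain ⟨d, hd⟩ := mem_span_singleton.1 (h k)
  have hcoord : ∀ j, b.repr z j * k = d * b.repr z j := fun j => by
    rw [← repr_lam_apply b hlam, ← hd, map_smul, Finsupp.smul_apply, smul_eq_mul]
  have hdk : d = k := by simpa [hz] using (hcoord j₀).symm
  rw [hcoord j, hdk]

theorem exists_repr_mem_center_of_lam_mem_span
    (hlam : ∀ (k : K) (i : I), lam k (b i) = k • b i) {z : U} (hz : z ≠ 0)
    (h : ∀ k, lam k z ∈ K ∙ z) :
    ∃ z' : U, z' ≠ 0 ∧ (∀ j, b.repr z' j ∈ Subring.center K) ∧ K ∙ z' = K ∙ z := by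
  obtain ⟨j₀, hj₀⟩ : ∃ j, b.repr z j ≠ 0 := Finsupp.ne_iff.1 (b.repr.map_ne_zero_iff.2 hz)
  have hspan : K ∙ ((b.repr z j₀)⁻¹ • z) = K ∙ z :=
    span_singleton_smul_eq (IsUnit.mk0 _ (inv_ne_zero hj₀)) z
  refine ⟨(b.repr z j₀)⁻¹ • z, smul_ne_zero (inv_ne_zero hj₀) hz,
    repr_mem_center_of_lam_mem_span b hlam (j₀ := j₀) ?_ fun k => ?_, hspan⟩
  · simp [inv_mul_cancel₀ hj₀]
  · rw [hspan, map_smul]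
    exact smul_mem _ _ (h k)

end RightScalar

section Regulus

variable {K U : Type*} [DivisionRing K] [AddCommGroup U] [Module K U]

def standardRegulus (lam : K → Module.End K U) : Set (Submodule K (U × U)) :=
  insert (Submodule.fst K U U)
    (Set.range fun k : K => LinearMap.range ((lam k : U →ₗ[K] U).prod LinearMap.id))

def IsTransversal {V : Type*} [AddCommGroup V] [Module K V] (T : Submodule K V)
    (R : Set (Submodule K V)) : Prop :=
  ∀ X ∈ R, finrank K ↥(T ⊓ X) = 1

theorem exists_invariant_point_of_isTransversal {lam : K → Module.End K U} (h0 : lam 0 = 0)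
    (h1 : lam 1 = 1) {T : Submodule K (U × U)} (hT : finrank K T = 2)
    (h : IsTransversal T (standardRegulus lam)) :
    ∃ z : U, z ≠ 0 ∧ (∀ k, lam k z ∈ K ∙ z) ∧ T = (K ∙ z).prod (K ∙ z) := by
  have hgraph : ∀ k, ∃ v ≠ 0, (lam k v, v) ∈ T := fun k =>
    exists_ne_zero_map_mem_of_finrank_inf_range T (LinearMap.prod_id_injective _)
      (h _ (Set.mem_insert_of_mem _ ⟨k, rfl⟩))
  have hfst := h _ (Set.mem_insert _ _)
  rw [fst_eq_range_inl] at hfst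
  obtain ⟨z, hz, hzT⟩ := exists_ne_zero_map_mem_of_finrank_inf_range T LinearMap.inl_injective hfst
  obtain ⟨w, hw, hwT⟩ := hgraph 0
  rw [h0] at hwT
  obtain rfl := eq_prod_of_finrank_eq_two hT hz hw hzT hwT
  obtain ⟨u, hu, huz, huw⟩ := hgraph 1
  rw [h1] at huz
  rw [← span_singleton_eq_of_mem hu huw, span_singleton_eq_of_mem hu huz] at hgraph ⊢
  refine ⟨z, hz, fun k => ?_, rfl⟩
  obtain ⟨v, hv, hvz, hvz'⟩ := hgraph k
  obtain ⟨t, rfl⟩ := mem_span_singleton.1 hvz'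
  have ht : t ≠ 0 := by rintro rfl; simp at hv
  rw [← smul_mem_iff _ ht, ← map_smul]
  exact hvz

theorem isTransversal_prod_of_invariant {lam : K → Module.End K U} {z : U} (hz : z ≠ 0)
    (h : ∀ k, lam k z ∈ K ∙ z) : IsTransversal ((K ∙ z).prod (K ∙ z)) (standardRegulus lam) := by
  rintro X (rfl | ⟨k, rfl⟩)
  · rw [fst_eq_range_inl, finrank_inf_range_of_injective _ LinearMap.inl_injective,
      prod_comap_inl, finrank_span_singleton hz]
  · rw [finrank_inf_range_of_injective _ (LinearMap.prod_id_injective _), LinearMap.comap_prod_prod,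
      comap_id, inf_eq_right.2 ((span_singleton_le_iff_mem z ((K ∙ z).comap (lam k))).2 (h k)),
      finrank_span_singleton hz]

end Regulus

/-- A line `T` (2-dimensional subspace) of `U × U` is a transversal of the
standard regulus `R₀` (meets each element of `R₀` in exactly one point, i.e.
in a 1-dimensional subspace) iff `T = K(z,0) ⊕ K(0,z)` for some nonzero `z`
in the `Z`-subspace of `U` w.r.t. `(b i)` (all coordinates of `z` central). -/
theorem stmt15 {K U I : Type*} [DivisionRing K] [AddCommGroup U] [Module K U]
    (b : Module.Basis I K U) (lam : K → Module.End K U)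
    (hlam : ∀ (k : K) (i : I), lam k (b i) = k • b i)
    (T : Submodule K (U × U)) (hT : Module.finrank K T = 2) :
    (∀ X ∈ insert (Submodule.fst K U U)
        (Set.range fun k : K =>
          LinearMap.range ((lam k : U →ₗ[K] U).prod (LinearMap.id : U →ₗ[K] U))),
        Module.finrank K ↥(T ⊓ X) = 1) ↔
    ∃ z : U, z ≠ 0 ∧ (∀ j : I, b.repr z j ∈ Subring.center K) ∧
      T = Submodule.span K ({(z, 0), (0, z)} : Set (U × U)) := by
  change IsTransversal T (standardRegulus lam) ↔ _
  constructor
  · intro h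
    obtain ⟨z, hz, hinv, rfl⟩ :=
      exists_invariant_point_of_isTransversal (lam_zero b hlam) (lam_one b hlam) hT h
    obtain ⟨z', hz', hcenter, hspan⟩ := exists_repr_mem_center_of_lam_mem_span b hlam hz hinv
    exact ⟨z', hz', hcenter, by rw [span_pair_inl_inr, hspan]⟩
  · rintro ⟨z, hz, hcenter, rfl⟩
    rw [span_pair_inl_inr]
    refine isTransversal_prod_of_invariant hz fun k => ?_
    rw [lam_eq_smul_of_repr_mem_center b hlam hcenter]
    exact smul_mem _ _ (mem_span_singleton_self z)
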